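/- In the side-by-side example, the strategy ACC that outputs acc on the empty history and keep on every nonempty history is not dominant: there exist a strategy t and an other-car input sequence γ : ℕ → A such that level(t, γ) > level(ACC, γ). (Indeed, on any γ with γ 0 ≠ acc that eventually differs from keep, ACC achieves at most level 1 while the constant-keep strategy achieves level 2.) -/
import Mathlib


/-- Actions of a car: accelerate, keep speed, decelerate. -/
inductive A : Type
  | acc : A
  | keep : A
  | dec : A
deriving DecidableEq

/-- Ego's action at step `n` when following strategy `s : List A → A` against
the other car's input sequence `γ : ℕ → A`: `s [γ 0, …, γ (n−1)]`. -/
def ego (s : List A → A) (γ : ℕ → A) (n : ℕ) : A :=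
  s (List.ofFn fun i : Fin n => γ i)

/-- Objective φ₁: eventually the cars are not side by side, i.e., at some step
ego's and the other car's actions differ. -/
def phi1 (s : List A → A) (γ : ℕ → A) : Prop :=
  ∃ n, ego s γ n ≠ γ n

/-- Objective φ₂: ego always keeps its speed. -/
def phi2 (s : List A → A) (γ : ℕ → A) : Prop :=
  ∀ n, ego s γ n = A.keep

open Classical in
/-- Satisfaction level: `2` if φ₁ ∧ φ₂ hold, `1` if φ₁ holds and φ₂ fails,
`0` if φ₁ fails. -/
noncomputable def level (s : List A → A) (γ : ℕ → A) : ℕ :=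
  if phi1 s γ ∧ phi2 s γ then 2 else if phi1 s γ then 1 else 0

/-- The strategy ACC: accelerate on the empty history, keep on every nonempty
history. -/
def ACC : List A → A := fun h => if h = [] then A.acc else A.keep

/-- The strategy ACC is not dominant: some strategy `t` achieves a strictly
higher level on some input sequence `γ`. -/
theorem acc_not_dominant :
    ∃ (t : List A → A) (γ : ℕ → A), level ACC γ < level t γ := by
  use fun _ => A.keep, fun _ => A.dec
  have ht1 : phi1 (fun _ => A.keep) (fun _ => A.dec) := ⟨0, by simp [ego]⟩
  have ht2 : phi2 (fun _ => A.keep) (fun _ => A.dec) := fun n => rfl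
  have ha1 : phi1 ACC (fun _ => A.dec) := ⟨0, by simp [ego, ACC]⟩
  have ha2 : ¬ phi2 ACC (fun _ => A.dec) := by
    intro h
    have := h 0
    simp [ego, ACC] at this
  simp [level, ht1, ht2, ha1, ha2]
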